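/- Let M̃_K = Σ_{k=1}^K d_k σ_rk² (σ_rk² − (τ̂_rk − τ_k)(τ̂_rk − τ̂_ok)). Then E[M̃_K] = 0 and E[M̃_K²] = Σ_{k=1}^K d_k² σ_rk⁴ (σ_rk² ξ_k² + σ_rk² σ_ok² + 2 σ_rk⁴). -/

import Mathlib

open MeasureTheory ProbabilityTheory Real
open scoped NNReal ENNReal

set_option linter.unusedVariables false
set_option linter.unusedSectionVars false
set_option maxHeartbeats 1000000

lemma int_pow_exp {b : ℝ} (hb : 0 < b) (n : ℕ) :
    Integrable fun x : ℝ => x ^ n * Real.exp (-b * x ^ 2) := by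
  have := integrable_rpow_mul_exp_neg_mul_sq hb (s := n) (lt_of_lt_of_le (by norm_num) (Nat.cast_nonneg n))
  simpa [Real.rpow_natCast] using this

lemma int_exp1 {b : ℝ} (hb : 0 < b) :
    ∫ x : ℝ, x * Real.exp (-b * x ^ 2) = 0 := by
  have hderiv : ∀ x : ℝ, HasDerivAt (fun x : ℝ => -(2*b)⁻¹ * Real.exp (-b * x ^ 2))
      (x * Real.exp (-b * x ^ 2)) x := by
    intro x
    have h2 : HasDerivAt (fun x : ℝ => -b * x ^ 2) (-b * (2 * x ^ 1)) x :=
      (hasDerivAt_pow 2 x).const_mul (-b)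
    have h3 := (h2.exp).const_mul (-(2*b)⁻¹)
    refine h3.congr_deriv ?_
    field_simp
  have h := MeasureTheory.integral_eq_zero_of_hasDerivAt_of_integrable hderiv
    (by simpa using int_pow_exp hb 1)
    (((integrable_exp_neg_mul_sq hb).const_mul _))
  simpa using h

lemma int_exp_rec {b : ℝ} (hb : 0 < b) (n : ℕ) :
    ∫ x : ℝ, x ^ (n+2) * Real.exp (-b * x ^ 2)
      = ((n+1 : ℝ)/(2*b)) * ∫ x : ℝ, x ^ n * Real.exp (-b * x ^ 2) := by
  set f' : ℝ → ℝ := fun x => (n+1 : ℝ) * (x ^ n * Real.exp (-b * x ^ 2))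
      - (2*b) * (x ^ (n+2) * Real.exp (-b * x ^ 2)) with hf'

  have hderiv : ∀ x : ℝ, HasDerivAt (fun x : ℝ => x ^ (n+1) * Real.exp (-b * x ^ 2)) (f' x) x := by
    intro x
    have h2 : HasDerivAt (fun x : ℝ => -b * x ^ 2) (-b * (2 * x ^ 1)) x :=
      (hasDerivAt_pow 2 x).const_mul (-b)
    have h3 := (hasDerivAt_pow (n+1) x).mul h2.exp
    refine h3.congr_deriv ?_
    simp only [hf', Nat.add_sub_cancel]
    push_cast
    ring
  have hint : Integrable f' :=
    (((int_pow_exp hb n).const_mul _).sub (((int_pow_exp hb (n+2)).const_mul _)))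
  have h0 := MeasureTheory.integral_eq_zero_of_hasDerivAt_of_integrable hderiv hint
    (int_pow_exp hb (n+1))
  rw [hf'] at h0
  rw [integral_sub ((int_pow_exp hb n).const_mul _) ((int_pow_exp hb (n+2)).const_mul _),
    MeasureTheory.integral_const_mul, MeasureTheory.integral_const_mul] at h0
  have hb' : (2*b) ≠ 0 := by positivity
  rw [div_mul_eq_mul_div, eq_comm, div_eq_iff hb']
  linarith [h0]

variable {v : ℝ≥0}

lemma gauss_integral (hv : v ≠ 0) (g : ℝ → ℝ) :
    ∫ x, g x ∂(gaussianReal 0 v) = ∫ x, gaussianPDFReal 0 v x * g x := by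
  rw [gaussianReal_of_var_ne_zero _ hv]
  have hmeas : Measurable fun x => (gaussianPDFReal 0 v x).toNNReal :=
    (measurable_gaussianPDFReal 0 v).real_toNNReal
  have : gaussianPDF 0 v = fun x => ((gaussianPDFReal 0 v x).toNNReal : ℝ≥0∞) := by
    funext x; rfl
  rw [this, integral_withDensity_eq_integral_smul hmeas]
  congr 1
  funext x
  simp [NNReal.smul_def, Real.coe_toNNReal _ (gaussianPDFReal_nonneg 0 v x)]

lemma gauss_integrable (hv : v ≠ 0) {g : ℝ → ℝ}
    (hint : Integrable (fun x => g x * gaussianPDFReal 0 v x)) :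
    Integrable g (gaussianReal 0 v) := by
  rw [gaussianReal_of_var_ne_zero _ hv]
  rw [integrable_withDensity_iff (measurable_gaussianPDF 0 v)
    (Filter.Eventually.of_forall fun x => ENNReal.ofReal_lt_top)]
  refine hint.congr (Filter.Eventually.of_forall fun x => ?_)
  simp only [gaussianPDF_def, ENNReal.toReal_ofReal (gaussianPDFReal_nonneg 0 v x)]

lemma gauss_pdf_eq (x : ℝ) :
    gaussianPDFReal 0 v x = (Real.sqrt (2*π*v))⁻¹ * Real.exp (-(2*(v:ℝ))⁻¹ * x^2) := by
  have harg : -(x-0)^2/(2*(v:ℝ)) = -(2*(v:ℝ))⁻¹ * x^2 := by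
    by_cases h : (v:ℝ) = 0
    · simp [h]
    · field_simp
      simp
  simp only [gaussianPDFReal, harg]

lemma gauss_moment (hv : v ≠ 0) (n : ℕ) :
    ∫ x, x ^ n ∂(gaussianReal 0 v)
      = (Real.sqrt (2*π*v))⁻¹ * ∫ x : ℝ, x ^ n * Real.exp (-(2*(v:ℝ))⁻¹ * x^2) := by
  rw [gauss_integral hv]
  rw [← MeasureTheory.integral_const_mul]
  congr 1; funext x
  rw [gauss_pdf_eq]; ring

lemma gauss_integrable_pow (hv : v ≠ 0) (n : ℕ) :
    Integrable (fun x => x ^ n) (gaussianReal 0 v) := by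
  have hb : 0 < (2*(v:ℝ))⁻¹ := by
    have : 0 < (v:ℝ) := lt_of_le_of_ne v.2 (by exact_mod_cast (Ne.symm hv))
    positivity
  refine gauss_integrable hv ?_
  have := ((int_pow_exp hb n).const_mul ((Real.sqrt (2*π*v))⁻¹))
  refine this.congr (Filter.Eventually.of_forall fun x => ?_)
  simp only [gauss_pdf_eq]; ring

lemma gauss_m0 (hv : v ≠ 0) :
    (Real.sqrt (2*π*v))⁻¹ * ∫ x : ℝ, x ^ 0 * Real.exp (-(2*(v:ℝ))⁻¹ * x^2) = 1 := by
  rw [← gauss_moment hv 0]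
  simp

lemma gauss_moment_one (hv : v ≠ 0) : ∫ x, x ∂(gaussianReal 0 v) = 0 := by
  have hb : 0 < (2*(v:ℝ))⁻¹ := by
    have : 0 < (v:ℝ) := lt_of_le_of_ne v.2 (by exact_mod_cast (Ne.symm hv))
    positivity
  have := gauss_moment hv 1
  simp only [pow_one] at this
  rw [this, int_exp1 hb, mul_zero]

lemma gauss_hv_pos (hv : v ≠ 0) : 0 < (v:ℝ) := lt_of_le_of_ne v.2 (by exact_mod_cast (Ne.symm hv))

lemma gauss_2b (hv : v ≠ 0) : 2 * (2*(v:ℝ))⁻¹ = (v:ℝ)⁻¹ := by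
  have := gauss_hv_pos hv
  field_simp

lemma gauss_moment_two (hv : v ≠ 0) : ∫ x, x^2 ∂(gaussianReal 0 v) = v := by
  have hv' := gauss_hv_pos hv
  have hb : 0 < (2*(v:ℝ))⁻¹ := by positivity
  rw [gauss_moment hv 2, show (2:ℕ) = 0 + 2 from rfl, int_exp_rec hb 0, gauss_2b hv]
  rw [← mul_assoc, mul_comm ((Real.sqrt (2*π*v))⁻¹) _, mul_assoc, gauss_m0 hv]
  push_cast
  field_simp
  norm_num

lemma gauss_moment_three (hv : v ≠ 0) : ∫ x, x^3 ∂(gaussianReal 0 v) = 0 := by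
  have hv' := gauss_hv_pos hv
  have hb : 0 < (2*(v:ℝ))⁻¹ := by positivity
  rw [gauss_moment hv 3, show (3:ℕ) = 1 + 2 from rfl, int_exp_rec hb 1]
  simp only [pow_one]
  rw [int_exp1 hb, mul_zero, mul_zero]

lemma gauss_moment_four (hv : v ≠ 0) : ∫ x, x^4 ∂(gaussianReal 0 v) = 3 * (v:ℝ)^2 := by
  have hv' := gauss_hv_pos hv
  have hb : 0 < (2*(v:ℝ))⁻¹ := by positivity
  have h2 := gauss_moment_two hv
  rw [gauss_moment hv 2] at h2
  rw [gauss_moment hv 4, show (4:ℕ) = 2 + 2 from rfl, int_exp_rec hb 2, gauss_2b hv]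
  rw [← mul_assoc, mul_comm ((Real.sqrt (2*π*v))⁻¹) _, mul_assoc, h2]
  push_cast
  field_simp
  ring

section Key
variable {Ω : Type*} [MeasurableSpace Ω] {μ : Measure Ω} [IsProbabilityMeasure μ]
  {X W : Ω → ℝ} {v : ℝ≥0}

lemma X_pow_integrable (hX : Measurable X) (hv : v ≠ 0) (hmap : μ.map X = gaussianReal 0 v)
    (n : ℕ) : Integrable (fun ω => X ω ^ n) μ := by
  have h := gauss_integrable_pow hv n
  rw [← hmap] at h
  exact (integrable_map_measure (measurable_id.pow_const n).aestronglyMeasurable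
    hX.aemeasurable).mp h

lemma X_pow_integral (hX : Measurable X) (hmap : μ.map X = gaussianReal 0 v) (n : ℕ) :
    ∫ ω, X ω ^ n ∂μ = ∫ x, x ^ n ∂(gaussianReal 0 v) := by
  have hg : Measurable fun x : ℝ => x ^ n := measurable_id.pow_const n
  rw [← hmap]
  exact (integral_map hX.aemeasurable hg.aestronglyMeasurable).symm

lemma key (μ : Measure Ω) [IsProbabilityMeasure μ] (X W : Ω → ℝ)
    (hX : Measurable X) (hW : Measurable W) (hXW : IndepFun X W μ)
    (hv : v ≠ 0) (hmap : μ.map X = gaussianReal 0 v)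
    (hWint : Integrable W μ) (hW2int : Integrable (fun ω => W ω ^ 2) μ)
    (c : ℝ) :
    Integrable (fun ω => c * ((v:ℝ) - X ω * (X ω - W ω))) μ ∧
    Integrable (fun ω => (c * ((v:ℝ) - X ω * (X ω - W ω))) ^ 2) μ ∧
    (∫ ω, c * ((v:ℝ) - X ω * (X ω - W ω)) ∂μ = 0) ∧
    (∫ ω, (c * ((v:ℝ) - X ω * (X ω - W ω))) ^ 2 ∂μ
      = c ^ 2 * (2 * (v:ℝ) ^ 2 + (v:ℝ) * ∫ ω, W ω ^ 2 ∂μ)) := by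
  set s : ℝ := (v:ℝ) with hs
  -- integrability of powers of X
  have hX1 : Integrable X μ := by simpa using X_pow_integrable hX hv hmap 1
  have hX2 : Integrable (fun ω => X ω ^ 2) μ := X_pow_integrable hX hv hmap 2
  have hX3 : Integrable (fun ω => X ω ^ 3) μ := X_pow_integrable hX hv hmap 3
  have hX4 : Integrable (fun ω => X ω ^ 4) μ := X_pow_integrable hX hv hmap 4
  -- moments
  have eX1 : ∫ ω, X ω ∂μ = 0 := by
    simpa using (X_pow_integral hX hmap 1).trans (by simpa using gauss_moment_one hv)
  have eX2 : ∫ ω, X ω ^ 2 ∂μ = s := (X_pow_integral hX hmap 2).trans (gauss_moment_two hv)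
  have eX3 : ∫ ω, X ω ^ 3 ∂μ = 0 := (X_pow_integral hX hmap 3).trans (gauss_moment_three hv)
  have eX4 : ∫ ω, X ω ^ 4 ∂μ = 3 * s ^ 2 := (X_pow_integral hX hmap 4).trans (gauss_moment_four hv)
  -- independence of powers
  have hind : ∀ a b : ℕ, IndepFun (fun ω => X ω ^ a) (fun ω => W ω ^ b) μ := fun a b =>
    hXW.comp (measurable_id.pow_const a) (measurable_id.pow_const b)
  have hXW1 : IndepFun X W μ := hXW
  -- integrability of products
  have hXWint : Integrable (fun ω => X ω * W ω) μ := hXW.integrable_mul hX1 hWint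
  have hX2W2int : Integrable (fun ω => X ω ^ 2 * W ω ^ 2) μ :=
    (hind 2 2).integrable_mul hX2 hW2int
  have hX3Wint : Integrable (fun ω => X ω ^ 3 * W ω) μ :=
    ((hXW.comp (measurable_id.pow_const 3) measurable_id).integrable_mul hX3 hWint)
  -- product integrals
  have eXW : ∫ ω, X ω * W ω ∂μ = 0 := by
    have h' : ∫ ω, X ω * W ω ∂μ = (∫ ω, X ω ∂μ) * ∫ ω, W ω ∂μ :=
      hXW.integral_fun_mul_eq_mul_integral hX.aestronglyMeasurable hW.aestronglyMeasurable
    rw [h', eX1, zero_mul]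
  have eX2W2 : ∫ ω, X ω ^ 2 * W ω ^ 2 ∂μ = s * ∫ ω, W ω ^ 2 ∂μ := by
    have h' : ∫ ω, X ω ^ 2 * W ω ^ 2 ∂μ = (∫ ω, X ω ^ 2 ∂μ) * ∫ ω, W ω ^ 2 ∂μ :=
      (hind 2 2).integral_fun_mul_eq_mul_integral (hX.pow_const 2).aestronglyMeasurable
        (hW.pow_const 2).aestronglyMeasurable
    rw [h', eX2]
  have eX3W : ∫ ω, X ω ^ 3 * W ω ∂μ = 0 := by
    have h' : ∫ ω, X ω ^ 3 * W ω ∂μ = (∫ ω, X ω ^ 3 ∂μ) * ∫ ω, W ω ∂μ :=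
      (hXW.comp (measurable_id.pow_const 3) measurable_id).integral_fun_mul_eq_mul_integral
        (hX.pow_const 3).aestronglyMeasurable hW.aestronglyMeasurable
    rw [h', eX3, zero_mul]
  -- T and its expansion
  have hTeq : (fun ω => c * (s - X ω * (X ω - W ω)))
      = fun ω => c * s - c * X ω ^ 2 + c * (X ω * W ω) := by
    funext ω; ring
  have hTint : Integrable (fun ω => c * (s - X ω * (X ω - W ω))) μ := by
    rw [hTeq]
    exact ((integrable_const (c * s)).sub (hX2.const_mul c)).add (hXWint.const_mul c)
  have hT2eq : (fun ω => (c * (s - X ω * (X ω - W ω))) ^ 2)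
      = fun ω => ((c^2 * s^2 + c^2 * X ω ^ 4 + c^2 * (X ω ^ 2 * W ω ^ 2))
          - (2*s*c^2) * X ω ^ 2) + ((2*s*c^2) * (X ω * W ω) - (2*c^2) * (X ω ^ 3 * W ω)) := by
    funext ω; ring
  have hT2int : Integrable (fun ω => (c * (s - X ω * (X ω - W ω))) ^ 2) μ := by
    rw [hT2eq]
    exact ((((integrable_const _).add (hX4.const_mul _)).add (hX2W2int.const_mul _)).sub
      (hX2.const_mul _)).add ((hXWint.const_mul _).sub (hX3Wint.const_mul _))
  have ia : Integrable (fun ω => c * s - c * X ω ^ 2) μ :=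
    (integrable_const (c * s)).sub (hX2.const_mul c)
  have ib : Integrable (fun ω => c * (X ω * W ω)) μ := hXWint.const_mul c
  have i1 : Integrable (fun ω => c^2*s^2 + c^2 * X ω ^ 4) μ :=
    (integrable_const _).add (hX4.const_mul _)
  have i2 : Integrable (fun ω => c^2*s^2 + c^2 * X ω ^ 4 + c^2 * (X ω ^ 2 * W ω ^ 2)) μ :=
    i1.add (hX2W2int.const_mul _)
  have i3 : Integrable (fun ω =>
      c^2*s^2 + c^2 * X ω ^ 4 + c^2 * (X ω ^ 2 * W ω ^ 2) - (2*s*c^2) * X ω ^ 2) μ :=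
    i2.sub (hX2.const_mul _)
  have i4 : Integrable (fun ω => (2*s*c^2) * (X ω * W ω) - (2*c^2) * (X ω ^ 3 * W ω)) μ :=
    (hXWint.const_mul _).sub (hX3Wint.const_mul _)
  refine ⟨hTint, hT2int, ?_, ?_⟩
  · rw [hTeq, integral_add ia ib, integral_sub (integrable_const (c * s)) (hX2.const_mul c),
      integral_const, MeasureTheory.integral_const_mul, MeasureTheory.integral_const_mul, eX2, eXW]
    simp
  · rw [hT2eq, integral_add i3 i4, integral_sub i2 (hX2.const_mul _),
      integral_add i1 (hX2W2int.const_mul _), integral_add (integrable_const _) (hX4.const_mul _),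
      integral_sub (hXWint.const_mul _) (hX3Wint.const_mul _), integral_const,
      MeasureTheory.integral_const_mul, MeasureTheory.integral_const_mul,
      MeasureTheory.integral_const_mul, MeasureTheory.integral_const_mul,
      MeasureTheory.integral_const_mul, eX4, eX2W2, eX2, eXW, eX3W]
    simp only [measure_univ, probReal_univ, ENNReal.toReal_one, smul_eq_mul, one_mul, mul_zero]
    ring

end Key

/-- **Mean and second moment of the variance-weighted martingale sum `M̃_K`.**
For `M̃_K = ∑_k d_k σ_rk² (σ_rk² − (τ̂_rk − τ_k)(τ̂_rk − τ̂_ok))`, we have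
`E[M̃_K] = 0` and
`E[M̃_K²] = ∑_k d_k² σ_rk⁴ (σ_rk² ξ_k² + σ_rk² σ_ok² + 2 σ_rk⁴)`. -/
theorem weighted_martingale_sum_mean_and_second_moment
{Ω : Type*} [MeasurableSpace Ω] (μ : Measure Ω) [IsProbabilityMeasure μ]
    (K : ℕ) (hK : 1 ≤ K)
    (d σr σo ξ τv : Fin K → ℝ)
    (hd : ∀ k, 0 < d k) (hσr : ∀ k, 0 < σr k)
    (τr τo : Ω → Fin K → ℝ)
    (hτr_meas : ∀ k, Measurable fun ω => τr ω k)
    (hτo_meas : ∀ k, Measurable fun ω => τo ω k)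
    (hτr_gauss : ∀ k, μ.map (fun ω => τr ω k)
        = gaussianReal (τv k) ⟨σr k ^ 2, sq_nonneg _⟩)
    (hτr_indep : iIndepFun (fun k ω => τr ω k) μ)
    (hτo_indep : iIndepFun (fun k ω => τo ω k) μ)
    (hro_indep : IndepFun (fun ω => τr ω) (fun ω => τo ω) μ)
    (hpairs_indep : iIndepFun
        (fun k ω => (τr ω k, τo ω k)) μ)
    (hτo_mem : ∀ k, MemLp (fun ω => τo ω k) 2 μ)
    (hτo_mean : ∀ k, ∫ ω, τo ω k ∂μ = τv k + ξ k)
    (hτo_var : ∀ k, variance (fun ω => τo ω k) μ = σo k ^ 2) :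
    (∫ ω, (∑ k, d k * σr k ^ 2
        * (σr k ^ 2 - (τr ω k - τv k) * (τr ω k - τo ω k))) ∂μ = 0)
    ∧ (∫ ω, (∑ k, d k * σr k ^ 2
          * (σr k ^ 2 - (τr ω k - τv k) * (τr ω k - τo ω k))) ^ 2 ∂μ
        = ∑ k, (d k) ^ 2 * σr k ^ 4
            * (σr k ^ 2 * ξ k ^ 2 + σr k ^ 2 * σo k ^ 2 + 2 * σr k ^ 4)) := by
  classical
  set T : Fin K → Ω → ℝ := fun k ω =>
    d k * σr k ^ 2 * (σr k ^ 2 - (τr ω k - τv k) * (τr ω k - τo ω k)) with hTdef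
  -- measurability of T
  have hTmeas : ∀ k, Measurable (T k) := by
    intro k
    exact measurable_const.mul (measurable_const.sub
      (((hτr_meas k).sub measurable_const).mul ((hτr_meas k).sub (hτo_meas k))))
  -- main per-coordinate facts
  have hmain : ∀ k, Integrable (T k) μ ∧ Integrable (fun ω => T k ω ^ 2) μ ∧
      (∫ ω, T k ω ∂μ = 0) ∧
      (∫ ω, T k ω ^ 2 ∂μ = (d k) ^ 2 * σr k ^ 4
          * (σr k ^ 2 * ξ k ^ 2 + σr k ^ 2 * σo k ^ 2 + 2 * σr k ^ 4)) := by
    intro k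
    set v : ℝ≥0 := ⟨σr k ^ 2, sq_nonneg _⟩ with hvdef
    have hσ2 : (0:ℝ) < σr k ^ 2 := pow_pos (hσr k) 2
    have hv : v ≠ 0 := by
      intro h
      have : (v : ℝ) = 0 := by rw [h]; simp
      rw [hvdef] at this
      exact absurd this hσ2.ne'
    set X : Ω → ℝ := fun ω => τr ω k - τv k with hXdef
    set W : Ω → ℝ := fun ω => τo ω k - τv k with hWdef
    have hXmeas : Measurable X := (hτr_meas k).sub measurable_const
    have hWmeas : Measurable W := (hτo_meas k).sub measurable_const
    have hmap : μ.map X = gaussianReal 0 v := by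
      have hcomp : X = (fun x : ℝ => x + -τv k) ∘ (fun ω => τr ω k) := by
        funext ω; rw [hXdef]; simp [sub_eq_add_neg]
      have hm : Measurable fun x : ℝ => x + -τv k := measurable_id.add_const _
      rw [hcomp, ← Measure.map_map hm (hτr_meas k),
        hτr_gauss k]
      exact (gaussianReal_map_add_const (-τv k)).trans (by norm_num; rfl)
    have hφ : Measurable fun f : Fin K → ℝ => f k - τv k :=
      (measurable_pi_apply k).sub measurable_const
    have hXW : IndepFun X W μ := hro_indep.comp hφ hφ
    have hWmem : MemLp W 2 μ := (hτo_mem k).sub (memLp_const (τv k))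
    have hWint : Integrable W μ := hWmem.integrable one_le_two
    have hW2int : Integrable (fun ω => W ω ^ 2) μ := hWmem.integrable_sq
    have hτoint : Integrable (fun ω => τo ω k) μ := (hτo_mem k).integrable one_le_two
    have hτo2int : Integrable (fun ω => (τo ω k) ^ 2) μ := (hτo_mem k).integrable_sq
    have eτo2 : ∫ ω, (τo ω k) ^ 2 ∂μ = σo k ^ 2 + (τv k + ξ k) ^ 2 := by
      have h := variance_eq_sub (hτo_mem k)
      rw [hτo_var k, hτo_mean k] at h
      have h2 : (μ[(fun ω => τo ω k) ^ 2] : ℝ) = ∫ ω, (τo ω k) ^ 2 ∂μ := rfl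
      rw [h2] at h
      linarith
    have eW2 : ∫ ω, W ω ^ 2 ∂μ = σo k ^ 2 + ξ k ^ 2 := by
      have hptw : (fun ω => W ω ^ 2)
          = fun ω => ((τo ω k) ^ 2 - (2 * τv k) * (τo ω k)) + (τv k) ^ 2 := by
        funext ω; rw [hWdef]; ring
      have ia : Integrable (fun ω => (τo ω k) ^ 2 - (2 * τv k) * (τo ω k)) μ :=
        hτo2int.sub (hτoint.const_mul _)
      have ib : Integrable (fun ω => (2 * τv k) * (τo ω k)) μ := hτoint.const_mul _
      rw [hptw, integral_add ia (integrable_const _),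
        integral_sub hτo2int ib, MeasureTheory.integral_const_mul,
        integral_const, eτo2, hτo_mean k]
      simp only [measure_univ, probReal_univ, ENNReal.toReal_one, smul_eq_mul, one_mul]
      ring
    obtain ⟨h1, h2, h3, h4⟩ := key μ X W hXmeas hWmeas hXW hv hmap hWint hW2int
      (d k * σr k ^ 2)
    have hTk : T k = fun ω => (d k * σr k ^ 2) * ((v:ℝ) - X ω * (X ω - W ω)) := by
      funext ω
      rw [hTdef, hXdef, hWdef]
      show d k * σr k ^ 2 * (σr k ^ 2 - (τr ω k - τv k) * (τr ω k - τo ω k))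
        = d k * σr k ^ 2 * (σr k ^ 2 - (τr ω k - τv k) * ((τr ω k - τv k) - (τo ω k - τv k)))
      ring
    rw [eW2] at h4
    refine ⟨by rw [hTk]; exact h1, by rw [hTk]; exact h2, by rw [hTk]; exact h3, ?_⟩
    rw [hTk, h4]
    show (d k * σr k ^ 2) ^ 2 * (2 * (σr k ^ 2) ^ 2 + σr k ^ 2 * (σo k ^ 2 + ξ k ^ 2))
      = d k ^ 2 * σr k ^ 4 * (σr k ^ 2 * ξ k ^ 2 + σr k ^ 2 * σo k ^ 2 + 2 * σr k ^ 4)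
    ring
  -- cross independence
  have hTTindep : ∀ j k, j ≠ k → IndepFun (T j) (T k) μ := by
    intro j k hjk
    have hg : ∀ i, Measurable fun p : ℝ × ℝ =>
        d i * σr i ^ 2 * (σr i ^ 2 - (p.1 - τv i) * (p.1 - p.2)) := fun i =>
      measurable_const.mul (measurable_const.sub
        ((measurable_fst.sub measurable_const).mul (measurable_fst.sub measurable_snd)))
    exact (hpairs_indep.indepFun hjk).comp (hg j) (hg k)
  constructor
  · show ∫ ω, ∑ k, T k ω ∂μ = 0
    rw [integral_finset_sum _ fun k _ => (hmain k).1]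
    exact Finset.sum_eq_zero fun k _ => (hmain k).2.2.1
  · show ∫ ω, (∑ k, T k ω) ^ 2 ∂μ = _
    have hprod : ∀ j k : Fin K, Integrable (fun ω => T j ω * T k ω) μ := by
      intro j k
      by_cases h : j = k
      · subst h
        have := (hmain j).2.1
        refine this.congr (Filter.Eventually.of_forall fun ω => ?_)
        exact pow_two _
      · exact (hTTindep j k h).integrable_mul (hmain j).1 (hmain k).1
    have hsq : ∀ ω, (∑ k, T k ω) ^ 2 = ∑ j, ∑ k, T j ω * T k ω := by
      intro ω; rw [pow_two, Finset.sum_mul_sum]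
    calc ∫ ω, (∑ k, T k ω) ^ 2 ∂μ = ∫ ω, ∑ j, ∑ k, T j ω * T k ω ∂μ := by
          simp only [hsq]
      _ = ∑ j, ∫ ω, ∑ k, T j ω * T k ω ∂μ :=
          integral_finset_sum _ fun j _ => integrable_finset_sum _ fun k _ => hprod j k
      _ = ∑ j, ∑ k, ∫ ω, T j ω * T k ω ∂μ :=
          Finset.sum_congr rfl fun j _ => integral_finset_sum _ fun k _ => hprod j k
      _ = ∑ j, ∫ ω, T j ω ^ 2 ∂μ := by
          refine Finset.sum_congr rfl fun j _ => ?_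
          refine Finset.sum_eq_single_of_mem j (Finset.mem_univ j) (fun k _ hkj => ?_) |>.trans ?_
          · have h' : ∫ ω, T j ω * T k ω ∂μ = (∫ ω, T j ω ∂μ) * ∫ ω, T k ω ∂μ :=
              (hTTindep j k fun h => hkj h.symm).integral_fun_mul_eq_mul_integral
                (hTmeas j).aestronglyMeasurable (hTmeas k).aestronglyMeasurable
            rw [h', (hmain j).2.2.1, zero_mul]
          · congr 1; funext ω; rw [pow_two]
      _ = ∑ k, (d k) ^ 2 * σr k ^ 4
            * (σr k ^ 2 * ξ k ^ 2 + σr k ^ 2 * σo k ^ 2 + 2 * σr k ^ 4) :=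
          Finset.sum_congr rfl fun k _ => (hmain k).2.2.2
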